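/- arXiv:1609.04529 — 2 statements merged into one kernel-verified Lean document; each statement's English description precedes it below -/
import Mathlib

section
/- For a > 0 and b > 0, the probability that B(t) ≤ a + b·t for all t ≥ 0 equals 1 − exp(−2ab). -/
open MeasureTheory ProbabilityTheory Real

/-- The standard normal density. -/
noncomputable def stdPdf (x : ℝ) : ℝ := Real.exp (-x ^ 2 / 2) / Real.sqrt (2 * Real.pi)

/-- The standard normal CDF `Φ`. -/
noncomputable def stdCDF (x : ℝ) : ℝ := ∫ u in Set.Iic x, stdPdf u

/-- A standard Brownian motion (indexed by `ℝ`, but only constrained on nonnegative times):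
starts at `0`, a.s. continuous paths, Gaussian increments `N(0, t - s)`, and independent
increments. -/
structure IsBrownianMotion {Ω : Type*} [MeasureSpace Ω] (B : ℝ → Ω → ℝ) : Prop where
  isProb : IsProbabilityMeasure (ℙ : Measure Ω)
  meas : ∀ t, Measurable (B t)
  start : ∀ᵐ ω ∂ℙ, B 0 ω = 0
  cont : ∀ᵐ ω ∂ℙ, Continuous fun t => B t ω
  incr : ∀ s t : ℝ, 0 ≤ s → s ≤ t →
    Measure.map (fun ω => B t ω - B s ω) ℙ = gaussianReal 0 (t - s).toNNReal
  indep : ∀ (n : ℕ) (t : Fin (n + 1) → ℝ), (∀ i, 0 ≤ t i) → Monotone t →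
    iIndepFun
      (fun (i : Fin n) ω => B (t i.succ) ω - B (t i.castSucc) ω) ℙ

open Filter Topology Finset
open scoped NNReal

/-!
Sample the path on the grid `δ ℕ`. Its increments are i.i.d. `N(0, δ)`, so along the sampled walk
`Sₙ` the process `exp (θ Sₙ - θ² n δ / 2)` is a martingale, and for `θ = 2b` it is at least
`exp (2ab)` once `Sₙ` exceeds the line `a + b n δ`. Optional stopping at the first crossing bounds
the probability that the sampled path crosses by `exp (-2ab)`. Conversely, the overshoot at the
first crossing is at most one increment, and the paths that stay below the line up to a horizon `T`
contribute at most `exp (ab - b² T / 2)` to the expectation of the stopped martingale; letting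
`δ → 0` and `T → ∞` along dyadic grids gives the matching lower bound. By continuity, a path that
crosses the line at some real time also crosses it at some dyadic time.
-/

lemma integrable_exp_mul_of_map_eq_gaussianReal {Ω : Type*} {mΩ : MeasurableSpace Ω}
    {μ : Measure Ω} [IsProbabilityMeasure μ] {X : Ω → ℝ} {m : ℝ} {v : ℝ≥0}
    (hX : μ.map X = gaussianReal m v) (t : ℝ) : Integrable (fun ω ↦ exp (t * X ω)) μ :=
  mgf_pos_iff.1 (by rw [mgf_gaussianReal hX]; positivity)

lemma integral_exp_mul_sub_of_map_eq_gaussianReal {Ω : Type*} {mΩ : MeasurableSpace Ω}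
    {μ : Measure Ω} {X : Ω → ℝ} {v : ℝ≥0}
    (hX : μ.map X = gaussianReal 0 v) (θ : ℝ) :
    ∫ ω, exp (θ * X ω - θ ^ 2 * v / 2) ∂μ = 1 := by
  simp_rw [sub_eq_add_neg, exp_add]
  rw [integral_mul_const, ← mgf, mgf_gaussianReal hX, ← exp_add]
  simp [mul_comm]

namespace GaussianWalk

variable {Ω : Type*} {mΩ : MeasurableSpace Ω} {μ : Measure Ω} {ξ : ℕ → Ω → ℝ}

def walk (ξ : ℕ → Ω → ℝ) (n : ℕ) (ω : Ω) : ℝ := ∑ i ∈ range n, ξ i ω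

abbrev past (ξ : ℕ → Ω → ℝ) (N : ℕ) : MeasurableSpace Ω :=
  ⨆ i ∈ Set.Iio N, MeasurableSpace.comap (ξ i) inferInstance

noncomputable def expMart (ξ : ℕ → Ω → ℝ) (v : ℝ≥0) (θ : ℝ) (n : ℕ) (ω : Ω) : ℝ :=
  exp (θ * walk ξ n ω - θ ^ 2 * (n * v) / 2)

def stayBelow (ξ : ℕ → Ω → ℝ) (v : ℝ≥0) (a b : ℝ) (N : ℕ) : Set Ω :=
  {ω | ∀ n ≤ N, walk ξ n ω ≤ a + b * (n * v)}

/-- The walk first exceeds the line at step `n + 1`. -/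
def firstCrossAt (ξ : ℕ → Ω → ℝ) (v : ℝ≥0) (a b : ℝ) (n : ℕ) : Set Ω :=
  stayBelow ξ v a b n \ stayBelow ξ v a b (n + 1)

def crosses (ξ : ℕ → Ω → ℝ) (v : ℝ≥0) (a b : ℝ) : Set Ω :=
  {ω | ∃ n : ℕ, a + b * (n * v) < walk ξ n ω}

structure IsIidGaussian (ξ : ℕ → Ω → ℝ) (v : ℝ≥0) (μ : Measure Ω) : Prop where
  measurable : ∀ i, Measurable (ξ i)
  map_eq : ∀ i, μ.map (ξ i) = gaussianReal 0 v
  iIndepFun : iIndepFun ξ μ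

@[simp] lemma walk_zero : walk ξ 0 = 0 := by ext; simp [walk]

lemma walk_succ (n : ℕ) (ω : Ω) : walk ξ (n + 1) ω = walk ξ n ω + ξ n ω :=
  sum_range_succ _ _

@[simp] lemma expMart_zero (v : ℝ≥0) (θ : ℝ) : expMart ξ v θ 0 = 1 := by ext; simp [expMart]

lemma expMart_succ (v : ℝ≥0) (θ : ℝ) (n : ℕ) (ω : Ω) :
    expMart ξ v θ (n + 1) ω = expMart ξ v θ n ω * exp (θ * ξ n ω - θ ^ 2 * v / 2) := by
  rw [expMart, expMart, ← exp_add, walk_succ]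
  push_cast
  ring_nf

section Past

variable {N : ℕ}

lemma past_le (hξ : ∀ i, Measurable (ξ i)) : past ξ N ≤ mΩ :=
  iSup₂_le fun i _ ↦ (hξ i).comap_le

lemma measurable_past {i : ℕ} (hi : i < N) : Measurable[past ξ N] (ξ i) :=
  (comap_measurable (ξ i)).mono (le_iSup₂_of_le i hi le_rfl) le_rfl

lemma measurable_walk_past {n : ℕ} (hn : n ≤ N) : Measurable[past ξ N] (walk ξ n) :=
  Finset.measurable_sum _ fun _ hi ↦ measurable_past ((mem_range.1 hi).trans_le hn)

lemma measurable_expMart_past (v : ℝ≥0) (θ : ℝ) : Measurable[past ξ N] (expMart ξ v θ N) :=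
  measurable_exp.comp (((measurable_walk_past le_rfl).const_mul θ).sub_const _)

lemma measurableSet_stayBelow_past (v : ℝ≥0) (a b : ℝ) :
    MeasurableSet[past ξ N] (stayBelow ξ v a b N) := by
  have : stayBelow ξ v a b N = ⋂ n ∈ Iic N, {ω | walk ξ n ω ≤ a + b * (n * v)} := by
    ext; simp [stayBelow]
  rw [this]
  exact .biInter (Set.to_countable _) fun n hn ↦
    measurableSet_le (measurable_walk_past (mem_Iic.1 hn)) measurable_const

lemma indepFun_past (hind : iIndepFun ξ μ) (hξ : ∀ i, Measurable (ξ i)) {f : Ω → ℝ}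
    (hf : Measurable[past ξ N] f) {g : ℝ → ℝ} (hg : Measurable g) :
    IndepFun f (fun ω ↦ g (ξ N ω)) μ := by
  rw [IndepFun_iff_Indep]
  refine indep_of_indep_of_le (indep_iSup_of_disjoint (fun i ↦ (hξ i).comap_le) hind.iIndep
    (S := Set.Iio N) (T := {N}) (by simp)) hf.comap_le ?_
  rw [_root_.iSup_singleton]
  exact (hg.comp (comap_measurable (ξ N))).comap_le

end Past

section Crossing

variable {v : ℝ≥0} {a b : ℝ}

lemma stayBelow_zero (ha : 0 ≤ a) : stayBelow ξ v a b 0 = Set.univ := by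
  ext ω
  simp [stayBelow, ha]

lemma stayBelow_anti {m n : ℕ} (hmn : m ≤ n) : stayBelow ξ v a b n ⊆ stayBelow ξ v a b m :=
  fun _ hω k hk ↦ hω k (hk.trans hmn)

lemma lt_walk_of_mem_firstCrossAt {n : ℕ} {ω : Ω} (hω : ω ∈ firstCrossAt ξ v a b n) :
    a + b * ((n + 1 : ℕ) * v) < walk ξ (n + 1) ω := by
  by_contra! h
  refine hω.2 fun m hm ↦ ?_
  rcases Nat.le_succ_iff.1 hm with hm | rfl
  · exact hω.1 m hm
  · exact h

lemma pairwise_disjoint_firstCrossAt :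
    Pairwise (Function.onFun Disjoint (firstCrossAt ξ v a b)) := by
  refine (pairwise_disjoint_on _).2 fun m n hmn ↦ Set.disjoint_left.2 fun ω hm hn ↦ ?_
  exact hm.2 (stayBelow_anti hmn hn.1)

lemma crosses_subset_iUnion_firstCrossAt (ha : 0 ≤ a) :
    crosses ξ v a b ⊆ ⋃ n, firstCrossAt ξ v a b n := by
  classical
  rintro ω ⟨n, hn⟩
  have hex : ∃ m, ω ∉ stayBelow ξ v a b m := ⟨n, fun h ↦ (h n le_rfl).not_gt hn⟩
  obtain ⟨m, hm⟩ : ∃ m, Nat.find hex = m + 1 :=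
    Nat.exists_eq_succ_of_ne_zero fun h0 ↦ by
      simpa [h0, stayBelow_zero ha] using Nat.find_spec hex
  refine Set.mem_iUnion.2 ⟨m, not_not.1 (Nat.find_min hex (hm ▸ m.lt_succ_self)), ?_⟩
  simpa [hm] using Nat.find_spec hex

lemma firstCrossAt_subset_crosses (n : ℕ) : firstCrossAt ξ v a b n ⊆ crosses ξ v a b :=
  fun _ hω ↦ ⟨n + 1, lt_walk_of_mem_firstCrossAt hω⟩

lemma exp_le_expMart_of_mem_firstCrossAt (hb : 0 ≤ b) {n : ℕ} {ω : Ω}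
    (hω : ω ∈ firstCrossAt ξ v a b n) : exp (2 * a * b) ≤ expMart ξ v (2 * b) (n + 1) ω := by
  have h := mul_le_mul_of_nonneg_left (lt_walk_of_mem_firstCrossAt hω).le
    (by positivity : (0 : ℝ) ≤ 2 * b)
  rw [expMart, exp_le_exp]
  nlinarith

lemma expMart_le_of_mem_firstCrossAt (hb : 0 ≤ b) {n : ℕ} {ω : Ω}
    (hω : ω ∈ firstCrossAt ξ v a b n) :
    expMart ξ v (2 * b) (n + 1) ω ≤ exp (2 * a * b + 2 * b * ξ n ω) := by
  have h := mul_le_mul_of_nonneg_left (hω.1 n le_rfl) (by positivity : (0 : ℝ) ≤ 2 * b)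
  rw [expMart, exp_le_exp, walk_succ]
  push_cast at h ⊢
  nlinarith [v.coe_nonneg]

lemma expMart_le_of_mem_stayBelow (hb : 0 ≤ b) {N : ℕ} {ω : Ω}
    (hω : ω ∈ stayBelow ξ v a b N) :
    expMart ξ v (2 * b) N ω ≤ exp (a * b - b ^ 2 * (N * v) / 2) * expMart ξ v b N ω := by
  have h := mul_le_mul_of_nonneg_left (hω N le_rfl) hb
  rw [expMart, expMart, ← exp_add, exp_le_exp]
  nlinarith

end Crossing

namespace IsIidGaussian

variable {v : ℝ≥0} {a b : ℝ}

lemma measurableSet_stayBelow (hW : IsIidGaussian ξ v μ) (N : ℕ) :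
    MeasurableSet (stayBelow ξ v a b N) :=
  past_le hW.measurable _ (measurableSet_stayBelow_past v a b)

lemma measurableSet_firstCrossAt (hW : IsIidGaussian ξ v μ) (n : ℕ) :
    MeasurableSet (firstCrossAt ξ v a b n) :=
  (hW.measurableSet_stayBelow n).diff (hW.measurableSet_stayBelow (n + 1))

variable [IsProbabilityMeasure μ]

lemma integrable_expMart (hW : IsIidGaussian ξ v μ) (θ : ℝ) (n : ℕ) :
    Integrable (expMart ξ v θ n) μ := by
  induction n with
  | zero => rw [expMart_zero]; exact integrable_const (1 : ℝ)
  | succ n ih =>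
    have hstep := (integrable_exp_mul_of_map_eq_gaussianReal (hW.map_eq n) θ).mul_const
      (exp (-(θ ^ 2 * v / 2)))
    have hprod := (indepFun_past hW.iIndepFun hW.measurable (measurable_expMart_past v θ)
      (g := fun x ↦ exp (θ * x) * exp (-(θ ^ 2 * v / 2))) (by fun_prop)).integrable_mul ih hstep
    convert hprod using 1
    ext ω
    simp [expMart_succ, sub_eq_add_neg, exp_add]

lemma setIntegral_expMart_succ (hW : IsIidGaussian ξ v μ) (θ : ℝ) {N : ℕ} {S : Set Ω}
    (hS : MeasurableSet[past ξ N] S) :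
    ∫ ω in S, expMart ξ v θ (N + 1) ω ∂μ = ∫ ω in S, expMart ξ v θ N ω ∂μ := by
  have hS' : MeasurableSet S := past_le hW.measurable S hS
  have hindep := indepFun_past hW.iIndepFun hW.measurable
    ((measurable_expMart_past v θ).indicator hS)
    (g := fun x ↦ exp (θ * x - θ ^ 2 * v / 2)) (by fun_prop)
  calc ∫ ω in S, expMart ξ v θ (N + 1) ω ∂μ
      = ∫ ω, S.indicator (expMart ξ v θ N) ω * exp (θ * ξ N ω - θ ^ 2 * v / 2) ∂μ := by
        rw [← integral_indicator hS']
        congr 1 with ω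
        by_cases hω : ω ∈ S <;> simp [hω, expMart_succ]
    _ = ∫ ω in S, expMart ξ v θ N ω ∂μ := by
        rw [hindep.integral_fun_mul_eq_mul_integral
          ((hW.integrable_expMart θ N).indicator hS').aestronglyMeasurable
          ((hW.measurable N).const_mul θ |>.sub_const _ |>.exp).aestronglyMeasurable,
          integral_exp_mul_sub_of_map_eq_gaussianReal (hW.map_eq N), mul_one,
          integral_indicator hS']

lemma integral_expMart (hW : IsIidGaussian ξ v μ) (θ : ℝ) (n : ℕ) :
    ∫ ω, expMart ξ v θ n ω ∂μ = 1 := by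
  induction n with
  | zero => simp
  | succ n ih => simpa [ih] using hW.setIntegral_expMart_succ θ (N := n) MeasurableSet.univ

/-- Optional stopping for the exponential martingale, stopped at the first crossing or at `N`. -/
lemma sum_setIntegral_firstCrossAt_add_setIntegral_stayBelow (hW : IsIidGaussian ξ v μ)
    (ha : 0 ≤ a) (θ : ℝ) (N : ℕ) :
    ∑ n ∈ range N, ∫ ω in firstCrossAt ξ v a b n, expMart ξ v θ (n + 1) ω ∂μ
      + ∫ ω in stayBelow ξ v a b N, expMart ξ v θ N ω ∂μ = 1 := by
  induction N with
  | zero => simp [stayBelow_zero ha]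
  | succ N ih =>
    have hsplit : ∫ ω in stayBelow ξ v a b N, expMart ξ v θ (N + 1) ω ∂μ
        = ∫ ω in stayBelow ξ v a b (N + 1), expMart ξ v θ (N + 1) ω ∂μ
          + ∫ ω in firstCrossAt ξ v a b N, expMart ξ v θ (N + 1) ω ∂μ := by
      rw [firstCrossAt, ← setIntegral_union Set.disjoint_sdiff_right
        (hW.measurableSet_firstCrossAt N) (hW.integrable_expMart θ _).integrableOn
        (hW.integrable_expMart θ _).integrableOn, Set.union_sdiff_cancel (stayBelow_anti N.le_succ)]
    rw [hW.setIntegral_expMart_succ θ (measurableSet_stayBelow_past v a b)] at hsplit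
    rw [sum_range_succ]
    linarith

lemma exp_mul_sum_measureReal_firstCrossAt_le_one (hW : IsIidGaussian ξ v μ) (ha : 0 ≤ a)
    (hb : 0 ≤ b) (N : ℕ) :
    exp (2 * a * b) * ∑ n ∈ range N, μ.real (firstCrossAt ξ v a b n) ≤ 1 := by
  have hterm (n : ℕ) : exp (2 * a * b) * μ.real (firstCrossAt ξ v a b n)
      ≤ ∫ ω in firstCrossAt ξ v a b n, expMart ξ v (2 * b) (n + 1) ω ∂μ := by
    rw [mul_comm, ← smul_eq_mul]
    exact setIntegral_ge_of_const_le (hW.measurableSet_firstCrossAt n) (measure_ne_top _ _)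
      (fun _ hω ↦ exp_le_expMart_of_mem_firstCrossAt hb hω)
      (hW.integrable_expMart _ _).integrableOn
  have hrest : 0 ≤ ∫ ω in stayBelow ξ v a b N, expMart ξ v (2 * b) N ω ∂μ :=
    setIntegral_nonneg (hW.measurableSet_stayBelow N) fun _ _ ↦ (exp_pos _).le
  rw [mul_sum]
  linarith [sum_le_sum fun n (_ : n ∈ range N) ↦ hterm n,
    hW.sum_setIntegral_firstCrossAt_add_setIntegral_stayBelow (b := b) ha (2 * b) N]

lemma measure_crosses_le (hW : IsIidGaussian ξ v μ) (ha : 0 ≤ a) (hb : 0 ≤ b) :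
    μ (crosses ξ v a b) ≤ ENNReal.ofReal (exp (-(2 * a * b))) := by
  refine (measure_mono (crosses_subset_iUnion_firstCrossAt ha)).trans <|
    (measure_iUnion_le _).trans <| ENNReal.tsum_le_of_sum_range_le fun N ↦ ?_
  rw [← sum_congr rfl fun n _ ↦ ofReal_measureReal (μ := μ) (s := firstCrossAt ξ v a b n),
    ← ENNReal.ofReal_sum_of_nonneg fun _ _ ↦ measureReal_nonneg]
  refine ENNReal.ofReal_le_ofReal ?_
  rw [exp_neg, inv_eq_one_div, le_div_iff₀' (exp_pos _)]
  exact hW.exp_mul_sum_measureReal_firstCrossAt_le_one ha hb N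

lemma sum_measureReal_firstCrossAt_le (hW : IsIidGaussian ξ v μ) (N : ℕ) :
    ∑ n ∈ range N, μ.real (firstCrossAt ξ v a b n) ≤ μ.real (crosses ξ v a b) := by
  rw [← measureReal_biUnion_finset (pairwise_disjoint_firstCrossAt.set_pairwise _)
    fun n _ ↦ hW.measurableSet_firstCrossAt n]
  exact measureReal_mono (Set.iUnion₂_subset fun n _ ↦ firstCrossAt_subset_crosses n)

lemma setIntegral_firstCrossAt_le (hW : IsIidGaussian ξ v μ) (hb : 0 ≤ b) (c : ℝ) {l : ℝ}
    (hl : 0 ≤ l) (n : ℕ) :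
    ∫ ω in firstCrossAt ξ v a b n, expMart ξ v (2 * b) (n + 1) ω ∂μ
      ≤ exp (2 * a * b + 2 * b * c) * μ.real (firstCrossAt ξ v a b n)
        + exp (2 * a * b - l * c + v * (2 * b + l) ^ 2 / 2) := by
  set A := firstCrossAt ξ v a b n
  have htilt := (integrable_exp_mul_of_map_eq_gaussianReal (hW.map_eq n) (2 * b + l)).const_mul
    (exp (2 * a * b - l * c))
  -- the overshoot is at most `ξ n`; its values above `c` are controlled by an exponential tilt
  have hle : ∀ ω ∈ A, expMart ξ v (2 * b) (n + 1) ω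
      ≤ exp (2 * a * b + 2 * b * c) + exp (2 * a * b - l * c) * exp ((2 * b + l) * ξ n ω) := by
    intro ω hω
    refine (expMart_le_of_mem_firstCrossAt hb hω).trans ?_
    rw [← exp_add]
    rcases le_or_gt (ξ n ω) c with h | h
    · exact le_add_of_le_of_nonneg (exp_le_exp.2 (by nlinarith)) (exp_pos _).le
    · exact le_add_of_nonneg_of_le (exp_pos _).le (exp_le_exp.2 (by nlinarith))
  calc ∫ ω in A, expMart ξ v (2 * b) (n + 1) ω ∂μ
      ≤ ∫ ω in A, (exp (2 * a * b + 2 * b * c)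
          + exp (2 * a * b - l * c) * exp ((2 * b + l) * ξ n ω)) ∂μ :=
        setIntegral_mono_on (hW.integrable_expMart _ _).integrableOn
          ((integrable_const _).add htilt).integrableOn (hW.measurableSet_firstCrossAt n) hle
    _ ≤ exp (2 * a * b + 2 * b * c) * μ.real A
          + ∫ ω, exp (2 * a * b - l * c) * exp ((2 * b + l) * ξ n ω) ∂μ := by
        rw [integral_add (integrable_const _).integrableOn htilt.integrableOn, setIntegral_const,
          smul_eq_mul, mul_comm]
        exact add_le_add_right (setIntegral_le_integral htilt
          (ae_of_all _ fun _ ↦ by positivity)) _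
    _ = exp (2 * a * b + 2 * b * c) * μ.real A
          + exp (2 * a * b - l * c + v * (2 * b + l) ^ 2 / 2) := by
        rw [integral_const_mul, ← mgf, mgf_gaussianReal (hW.map_eq n), zero_mul, zero_add,
          ← exp_add]

lemma setIntegral_stayBelow_le (hW : IsIidGaussian ξ v μ) (hb : 0 ≤ b) (N : ℕ) :
    ∫ ω in stayBelow ξ v a b N, expMart ξ v (2 * b) N ω ∂μ
      ≤ exp (a * b - b ^ 2 * (N * v) / 2) := by
  have hint := (hW.integrable_expMart b N).const_mul (exp (a * b - b ^ 2 * (N * v) / 2))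
  calc ∫ ω in stayBelow ξ v a b N, expMart ξ v (2 * b) N ω ∂μ
      ≤ ∫ ω in stayBelow ξ v a b N, exp (a * b - b ^ 2 * (N * v) / 2) * expMart ξ v b N ω ∂μ :=
        setIntegral_mono_on (hW.integrable_expMart _ _).integrableOn hint.integrableOn
          (hW.measurableSet_stayBelow N) fun _ hω ↦ expMart_le_of_mem_stayBelow hb hω
    _ ≤ ∫ ω, exp (a * b - b ^ 2 * (N * v) / 2) * expMart ξ v b N ω ∂μ :=
        setIntegral_le_integral hint (ae_of_all _ fun _ ↦ by simp only [expMart]; positivity)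
    _ = exp (a * b - b ^ 2 * (N * v) / 2) := by
        rw [integral_const_mul, hW.integral_expMart, mul_one]

lemma one_le_measureReal_crosses_add (hW : IsIidGaussian ξ v μ) (ha : 0 ≤ a) (hb : 0 ≤ b)
    (c : ℝ) {l : ℝ} (hl : 0 ≤ l) (N : ℕ) :
    1 ≤ exp (2 * a * b + 2 * b * c) * μ.real (crosses ξ v a b)
      + N * exp (2 * a * b - l * c + v * (2 * b + l) ^ 2 / 2)
      + exp (a * b - b ^ 2 * (N * v) / 2) := by
  have hsum := sum_le_sum fun n (_ : n ∈ range N) ↦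
    hW.setIntegral_firstCrossAt_le (a := a) hb c hl n
  rw [sum_add_distrib, ← mul_sum, sum_const, card_range, nsmul_eq_mul] at hsum
  have hcross := mul_le_mul_of_nonneg_left (hW.sum_measureReal_firstCrossAt_le (a := a) (b := b) N)
    (exp_pos (2 * a * b + 2 * b * c)).le
  linarith [hW.sum_setIntegral_firstCrossAt_add_setIntegral_stayBelow (b := b) ha (2 * b) N,
    hW.setIntegral_stayBelow_le (a := a) hb N]

end IsIidGaussian

end GaussianWalk

section Grid

open GaussianWalk

variable {Ω : Type*} {B : ℝ → Ω → ℝ}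

def gridIncrement (B : ℝ → Ω → ℝ) (δ : ℝ≥0) (n : ℕ) (ω : Ω) : ℝ :=
  B ((n + 1 : ℕ) * δ) ω - B (n * δ) ω

/-- Measured from `B 0`, which vanishes only almost surely. -/
def gridCrosses (B : ℝ → Ω → ℝ) (δ : ℝ≥0) (a b : ℝ) : Set Ω :=
  {ω | ∃ n : ℕ, a + b * (n * δ) < B (n * δ) ω - B 0 ω}

lemma walk_gridIncrement (δ : ℝ≥0) (n : ℕ) (ω : Ω) :
    walk (gridIncrement B δ) n ω = B (n * δ) ω - B 0 ω := by
  simp only [walk, gridIncrement]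
  rw [sum_range_sub (fun i : ℕ ↦ B (i * δ) ω)]
  simp

lemma crosses_gridIncrement (δ : ℝ≥0) (a b : ℝ) :
    crosses (gridIncrement B δ) δ a b = gridCrosses B δ a b := by
  simp [crosses, gridCrosses, walk_gridIncrement]

lemma gridCrosses_subset_gridCrosses_two_pow_succ (a b : ℝ) (k : ℕ) :
    gridCrosses B ((2 ^ k)⁻¹) a b ⊆ gridCrosses B ((2 ^ (k + 1))⁻¹) a b := by
  rintro ω ⟨n, hn⟩
  refine ⟨2 * n, ?_⟩
  have htime : ((2 * n : ℕ) : ℝ) * ((2 ^ (k + 1))⁻¹ : ℝ≥0) = n * ((2 ^ k)⁻¹ : ℝ≥0) := by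
    push_cast
    field_simp
    ring
  rwa [htime]

/-- The error terms of `IsIidGaussian.one_le_measureReal_crosses_add` for step `x⁻¹`, tilt `c x`
and horizon `x ^ 2`. -/
lemma tendsto_gridCrossing_error_atTop (a : ℝ) {b c : ℝ} (hb : 0 < b) (hc : 0 < c) :
    Tendsto (fun x : ℝ ↦ x ^ 2 * exp (2 * a * b - c * x * c + x⁻¹ * (2 * b + c * x) ^ 2 / 2)
      + exp (a * b - b ^ 2 * (x ^ 2 * x⁻¹) / 2)) atTop (𝓝 0) := by
  have hx2 : Tendsto (fun x : ℝ ↦ x ^ (2 : ℝ) * exp (-(c ^ 2 / 2) * x)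
      * exp (2 * a * b + 2 * b * c + 2 * b ^ 2 * x⁻¹)) atTop (𝓝 0) := by
    simpa using (tendsto_rpow_mul_exp_neg_mul_atTop_nhds_zero 2 _ (by positivity)).mul
      ((continuous_exp.tendsto _).comp
        (tendsto_const_nhds.add (tendsto_inv_atTop_zero.const_mul (2 * b ^ 2))))
        |>.congr fun x ↦ rfl
  have hexp : Tendsto (fun x : ℝ ↦ exp (a * b) * (x ^ (0 : ℝ) * exp (-(b ^ 2 / 2) * x)))
      atTop (𝓝 0) := by
    simpa using (tendsto_rpow_mul_exp_neg_mul_atTop_nhds_zero 0 _ (by positivity)).const_mul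
      (exp (a * b))
  have hsum := hx2.add hexp
  rw [zero_add] at hsum
  refine hsum.congr' ?_
  filter_upwards [eventually_gt_atTop 0] with x hx
  simp only [rpow_two, rpow_zero, one_mul, mul_assoc, ← exp_add]
  congr 2
  · congr 1
    field_simp
    ring
  · field_simp
    ring

lemma exists_lt_iff_mem_iUnion_gridCrosses {a b : ℝ} {ω : Ω} (h0 : B 0 ω = 0)
    (hcont : Continuous fun t ↦ B t ω) :
    (∃ t, 0 ≤ t ∧ a + b * t < B t ω) ↔ ω ∈ ⋃ k : ℕ, gridCrosses B (2 ^ k)⁻¹ a b := by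
  simp only [Set.mem_iUnion, gridCrosses, Set.mem_ofPred_eq, h0, sub_zero]
  constructor
  · rintro ⟨t, ht, hlt⟩
    have hgrid : Tendsto (fun k : ℕ ↦ (⌈t * 2 ^ k⌉₊ : ℝ) / 2 ^ k) atTop (𝓝 t) :=
      (tendsto_nat_ceil_mul_div_atTop ht).comp (tendsto_pow_atTop_atTop_of_one_lt one_lt_two)
    have hpos : ∀ᶠ k in atTop, 0 < B ((⌈t * 2 ^ k⌉₊ : ℝ) / 2 ^ k) ω
        - (a + b * ((⌈t * 2 ^ k⌉₊ : ℝ) / 2 ^ k)) :=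
      (((hcont.sub (continuous_const.add (continuous_const_mul b))).tendsto t).comp
        hgrid).eventually (lt_mem_nhds (by simpa using hlt))
    obtain ⟨k, hk⟩ := hpos.exists
    refine ⟨k, ⌈t * 2 ^ k⌉₊, ?_⟩
    push_cast
    rw [← div_eq_mul_inv]
    linarith
  · rintro ⟨k, n, hn⟩
    exact ⟨_, by positivity, hn⟩

namespace IsBrownianMotion

variable [MeasureSpace Ω]

lemma hasIndepIncrements (hB : IsBrownianMotion B) :
    HasIndepIncrements (fun t : ℝ≥0 ↦ B t) ℙ :=
  fun n t ht ↦ hB.indep n (fun i ↦ t i) (fun i ↦ (t i).2) (NNReal.coe_mono.comp ht)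

lemma isIidGaussian_gridIncrement (hB : IsBrownianMotion B) (δ : ℝ≥0) :
    IsIidGaussian (gridIncrement B δ) δ ℙ where
  measurable n := (hB.meas _).sub (hB.meas _)
  map_eq n := by
    have h := hB.incr (n * δ) ((n + 1 : ℕ) * δ) (by positivity) (by gcongr; simp)
    rwa [show ((n + 1 : ℕ) * δ - n * δ : ℝ) = δ by push_cast; ring, Real.toNNReal_coe] at h
  iIndepFun := by
    convert hB.hasIndepIncrements.nat (t := fun n : ℕ ↦ (n : ℝ≥0) * δ)
      (fun _ _ h ↦ mul_le_mul_of_nonneg_right (Nat.mono_cast h) zero_le) using 1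
    ext i ω
    simp [gridIncrement]

lemma measurableSet_gridCrosses (hB : IsBrownianMotion B) (δ : ℝ≥0) (a b : ℝ) :
    MeasurableSet (gridCrosses B δ a b) := by
  simp only [gridCrosses, Set.ofPred_exists]
  exact .iUnion fun n ↦ measurableSet_lt measurable_const ((hB.meas _).sub (hB.meas _))

lemma one_le_exp_mul_measureReal_iUnion_gridCrosses (hB : IsBrownianMotion B) {a b c : ℝ}
    (ha : 0 ≤ a) (hb : 0 < b) (hc : 0 < c) :
    1 ≤ exp (2 * a * b + 2 * b * c) * Measure.real ℙ (⋃ k : ℕ, gridCrosses B (2 ^ k)⁻¹ a b) := by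
  have := hB.isProb
  have hbound (k : ℕ) : 1 ≤ exp (2 * a * b + 2 * b * c)
        * Measure.real ℙ (⋃ k : ℕ, gridCrosses B (2 ^ k)⁻¹ a b)
      + ((2 ^ k) ^ 2 * exp (2 * a * b - c * 2 ^ k * c + (2 ^ k)⁻¹ * (2 * b + c * 2 ^ k) ^ 2 / 2)
        + exp (a * b - b ^ 2 * ((2 ^ k) ^ 2 * (2 ^ k)⁻¹) / 2)) := by
    have h := (hB.isIidGaussian_gridIncrement (2 ^ k)⁻¹).one_le_measureReal_crosses_add ha hb.le c
      (l := c * 2 ^ k) (by positivity) ((2 ^ k) ^ 2)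
    rw [crosses_gridIncrement] at h
    push_cast at h
    have hsub := mul_le_mul_of_nonneg_left (measureReal_mono (μ := ℙ)
      (Set.subset_iUnion (fun k : ℕ ↦ gridCrosses B (2 ^ k)⁻¹ a b) k))
      (exp_pos (2 * a * b + 2 * b * c)).le
    linarith
  have herr := (tendsto_gridCrossing_error_atTop a hb hc).comp
    (tendsto_pow_atTop_atTop_of_one_lt one_lt_two)
  exact ge_of_tendsto (by simpa using tendsto_const_nhds.add herr) (.of_forall hbound)

lemma measure_iUnion_gridCrosses (hB : IsBrownianMotion B) {a b : ℝ} (ha : 0 ≤ a) (hb : 0 < b) :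
    ℙ (⋃ k : ℕ, gridCrosses B (2 ^ k)⁻¹ a b) = ENNReal.ofReal (exp (-(2 * a * b))) := by
  have := hB.isProb
  refine le_antisymm ?_ (ENNReal.ofReal_le_of_le_toReal ?_)
  · rw [(monotone_nat_of_le_succ (gridCrosses_subset_gridCrosses_two_pow_succ a b)).measure_iUnion]
    refine iSup_le fun k ↦ ?_
    rw [← crosses_gridIncrement]
    exact (hB.isIidGaussian_gridIncrement _).measure_crosses_le ha hb.le
  · set P := Measure.real ℙ (⋃ k : ℕ, gridCrosses B (2 ^ k)⁻¹ a b)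
    have hlim : Tendsto (fun c ↦ exp (2 * a * b + 2 * b * c) * P) (𝓝[>] 0)
        (𝓝 (exp (2 * a * b) * P)) := by
      simpa using ((Continuous.tendsto (by fun_prop) 0).mono_left nhdsWithin_le_nhds :
        Tendsto (fun c ↦ exp (2 * a * b + 2 * b * c) * P) (𝓝[>] 0) _)
    have h := ge_of_tendsto hlim (eventually_nhdsWithin_of_forall fun c hc ↦
      hB.one_le_exp_mul_measureReal_iUnion_gridCrosses ha hb hc)
    rw [exp_neg, inv_eq_one_div, div_le_iff₀' (exp_pos _)]
    exact h

end IsBrownianMotion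

end Grid

/-- For `a > 0` and `b > 0`, `P(B t ≤ a + b t for all t ≥ 0) = 1 - e^{-2ab}`. -/
theorem bachelier_levy_infinite_horizon {Ω : Type*} [MeasureSpace Ω] (B : ℝ → Ω → ℝ)
    (hB : IsBrownianMotion B) (a b : ℝ) (ha : 0 < a) (hb : 0 < b) :
    ℙ {ω | ∀ t : ℝ, 0 ≤ t → B t ω ≤ a + b * t} =
      ENNReal.ofReal (1 - Real.exp (-2 * a * b)) := by
  have := hB.isProb
  have hae : ({ω | ∀ t : ℝ, 0 ≤ t → B t ω ≤ a + b * t} : Set Ω)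
      =ᵐ[ℙ] ((⋃ k : ℕ, gridCrosses B (2 ^ k)⁻¹ a b)ᶜ : Set Ω) := by
    rw [eventuallyEq_set]
    filter_upwards [hB.start, hB.cont] with ω h0 hcont
    rw [Set.mem_compl_iff, ← exists_lt_iff_mem_iUnion_gridCrosses h0 hcont]
    simp
  rw [measure_congr hae, measure_compl (MeasurableSet.iUnion fun k ↦
      hB.measurableSet_gridCrosses _ a b) (measure_ne_top _ _), measure_univ,
    hB.measure_iUnion_gridCrosses ha.le hb, ENNReal.ofReal_sub _ (exp_pos _).le,
    ENNReal.ofReal_one, neg_mul, neg_mul]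
end

section
/- The function p(m) = (2/(1+s̄))Φ(√s̄·m)φ(m) + (2s̄/(1+s̄))m²Φ(√s̄·m)φ(m) + (2√s̄/(1+s̄))m·φ(√s̄·m)φ(m), for fixed s̄ ∈ (0,1], is a probability density: it is nonnegative and integrates to 1 over ℝ. -/
/-!
Write `c = √s̄`. Then `p m = (2/(1+s̄)) φ(m) ((1 + (cm)²) Φ(cm) + cm φ(cm))`, and the
bracket is nonnegative by the Mills-ratio bound `Φ(t) ≥ -t φ(t)/(1+t²)`: the difference of
the two sides tends to `0` at `-∞` and has derivative `2φ(t)/(1+t²)² ≥ 0`.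
For the total mass, `Φ(-x) = 1 - Φ(x)` and the oddness of the last term give
`p(m) + p(-m) = (2/(1+s̄)) (1 + s̄m²) φ(m)`, whose integral is `2` because `φ` has
second moment `1`.
-/

open MeasureTheory ProbabilityTheory Real

open Set Filter

theorem integral_add_comp_neg {G E : Type*} [MeasurableSpace G] [AddGroup G] [MeasurableNeg G]
    [NormedAddCommGroup E] [NormedSpace ℝ E] {μ : Measure G} [μ.IsNegInvariant] {f : G → E}
    (hf : Integrable f μ) : ∫ x, (f x + f (-x)) ∂μ = (2 : ℝ) • ∫ x, f x ∂μ := by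
  rw [integral_add hf hf.comp_neg, integral_neg_eq_self, two_smul]

lemma stdPdf_eq_gaussianPDFReal : stdPdf = gaussianPDFReal 0 1 := by
  funext x
  simp [stdPdf, gaussianPDFReal, div_eq_inv_mul]

lemma stdPdf_nonneg (x : ℝ) : 0 ≤ stdPdf x := by
  unfold stdPdf; positivity

lemma stdPdf_neg (x : ℝ) : stdPdf (-x) = stdPdf x := by
  simp [stdPdf]

@[fun_prop]
lemma continuous_stdPdf : Continuous stdPdf := by
  unfold stdPdf; fun_prop

lemma integrable_stdPdf : Integrable stdPdf :=
  stdPdf_eq_gaussianPDFReal ▸ integrable_gaussianPDFReal 0 1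

lemma integral_stdPdf : ∫ x, stdPdf x = 1 :=
  stdPdf_eq_gaussianPDFReal ▸ integral_gaussianPDFReal_eq_one 0 one_ne_zero

lemma hasDerivAt_stdPdf (x : ℝ) : HasDerivAt stdPdf (-x * stdPdf x) x := by
  have h := ((hasDerivAt_pow 2 x).neg.div_const 2).exp.div_const (√(2 * π))
  refine h.congr_deriv ?_
  simp [stdPdf]; ring

lemma integrable_mul_stdPdf : Integrable fun x => x * stdPdf x := by
  convert (integrable_mul_exp_neg_mul_sq (b := 1 / 2) (by norm_num)).div_const (√(2 * π)) using 2
  rw [stdPdf, mul_div_assoc, neg_div, neg_mul, one_div_mul_eq_div]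

lemma integrable_sq_mul_stdPdf : Integrable fun x => x ^ 2 * stdPdf x := by
  convert (integrable_rpow_mul_exp_neg_mul_sq (b := 1 / 2) (by norm_num)
    (s := 2) (by norm_num)).div_const (√(2 * π)) using 2
  rw [stdPdf, rpow_two, mul_div_assoc, neg_div, neg_mul, one_div_mul_eq_div]

lemma integral_sq_mul_stdPdf : ∫ x, x ^ 2 * stdPdf x = 1 := by
  have hderiv (x : ℝ) :
      HasDerivAt (fun t => -(t * stdPdf t)) (x ^ 2 * stdPdf x - stdPdf x) x :=
    ((hasDerivAt_id' x).fun_mul (hasDerivAt_stdPdf x)).fun_neg.congr_deriv (by ring)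
  have h := integral_eq_zero_of_hasDerivAt_of_integrable hderiv
    (integrable_sq_mul_stdPdf.sub integrable_stdPdf) integrable_mul_stdPdf.neg
  rwa [integral_sub integrable_sq_mul_stdPdf integrable_stdPdf, integral_stdPdf, sub_eq_zero] at h

lemma integrable_one_add_mul_sq_mul_stdPdf (a : ℝ) :
    Integrable fun x => (1 + a * x ^ 2) * stdPdf x := by
  simp_rw [add_mul, one_mul, mul_assoc]
  exact integrable_stdPdf.add (integrable_sq_mul_stdPdf.const_mul a)

lemma integral_one_add_mul_sq_mul_stdPdf (a : ℝ) :
    ∫ x, (1 + a * x ^ 2) * stdPdf x = 1 + a := by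
  simp_rw [add_mul, one_mul, mul_assoc]
  rw [integral_add integrable_stdPdf (integrable_sq_mul_stdPdf.const_mul a), integral_const_mul,
    integral_stdPdf, integral_sq_mul_stdPdf, mul_one]

lemma monotone_stdCDF : Monotone stdCDF := fun _ _ hxy =>
  setIntegral_mono_set integrable_stdPdf.integrableOn (.of_forall stdPdf_nonneg)
    (Iic_subset_Iic.mpr hxy).eventuallyLE

@[fun_prop]
lemma measurable_stdCDF : Measurable stdCDF :=
  monotone_stdCDF.measurable

lemma stdCDF_neg (x : ℝ) : stdCDF (-x) = 1 - stdCDF x := by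
  have h : stdCDF (-x) = ∫ u in Ioi x, stdPdf u := by
    rw [stdCDF, ← integral_comp_neg_Ioi]
    simp_rw [stdPdf_neg]
  rw [h, eq_sub_iff_add_eq', stdCDF, intervalIntegral.integral_Iic_add_Ioi
    integrable_stdPdf.integrableOn integrable_stdPdf.integrableOn, integral_stdPdf]

lemma hasDerivAt_neg_mul_stdPdf_div (x : ℝ) :
    HasDerivAt (fun t => -t * stdPdf t / (1 + t ^ 2))
      (stdPdf x - 2 / (1 + x ^ 2) ^ 2 * stdPdf x) x := by
  have h := ((hasDerivAt_id' x).fun_neg.fun_mul (hasDerivAt_stdPdf x)).fun_div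
    ((hasDerivAt_pow 2 x).const_add 1) (by positivity)
  refine h.congr_deriv ?_
  field_simp
  push_cast
  ring

lemma neg_mul_stdPdf_div_le_stdCDF (x : ℝ) : -x * stdPdf x / (1 + x ^ 2) ≤ stdCDF x := by
  set F := fun t : ℝ => -t * stdPdf t / (1 + t ^ 2)
  set g := fun t : ℝ => 2 / (1 + t ^ 2) ^ 2 * stdPdf t
  have hg : Integrable g := by
    refine integrable_stdPdf.bdd_mul (c := 2) (by fun_prop : Measurable _).aestronglyMeasurable
      (.of_forall fun t => ?_)
    rw [norm_div, norm_two, norm_of_nonneg (by positivity), div_le_iff₀ (by positivity)]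
    nlinarith [sq_nonneg t]
  have hF : Integrable F := by
    have hbdd : Integrable fun t => t * stdPdf t * (1 + t ^ 2)⁻¹ := by
      refine integrable_mul_stdPdf.mul_bdd (c := 1)
        (by fun_prop : Measurable _).aestronglyMeasurable (.of_forall fun t => ?_)
      rw [norm_inv, norm_of_nonneg (by positivity)]
      exact inv_le_one_of_one_le₀ (by nlinarith [sq_nonneg t])
    exact hbdd.neg.congr (.of_forall fun t => by simp only [F, Pi.neg_apply]; ring)
  have hF' : Integrable fun t => stdPdf t - g t := integrable_stdPdf.sub hg
  have hF_atBot : Tendsto F atBot (nhds 0) :=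
    tendsto_zero_of_hasDerivAt_of_integrableOn_Iic (a := 0)
      (fun t _ => hasDerivAt_neg_mul_stdPdf_div t) hF'.integrableOn hF.integrableOn
  have hF_integral : ∫ t in Iic x, (stdPdf t - g t) = F x - 0 :=
    integral_Iic_of_hasDerivAt_of_tendsto' (fun t _ => hasDerivAt_neg_mul_stdPdf_div t)
      hF'.integrableOn hF_atBot
  have hg_nonneg : 0 ≤ ∫ t in Iic x, g t :=
    setIntegral_nonneg measurableSet_Iic fun t _ =>
      mul_nonneg (by positivity) (stdPdf_nonneg t)
  rw [integral_sub integrable_stdPdf.integrableOn hg.integrableOn, ← stdCDF] at hF_integral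
  linarith

lemma one_add_sq_mul_stdCDF_add_mul_stdPdf_nonneg (x : ℝ) :
    0 ≤ (1 + x ^ 2) * stdCDF x + x * stdPdf x := by
  have h := neg_mul_stdPdf_div_le_stdCDF x
  rw [div_le_iff₀ (by positivity)] at h
  linarith

/-- For fixed `s̄ ∈ (0,1]`, the function
`p m = (2/(1+s̄)) Φ(√s̄ m) φ(m) + (2s̄/(1+s̄)) m² Φ(√s̄ m) φ(m) + (2√s̄/(1+s̄)) m φ(√s̄ m) φ(m)`
is a probability density: nonnegative and integrating to `1`. -/
theorem slepian_density_is_probability_density (sb : ℝ) (hsb : sb ∈ Set.Ioc (0 : ℝ) 1)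
    (p : ℝ → ℝ)
    (hp : ∀ m, p m = (2 / (1 + sb)) * stdCDF (Real.sqrt sb * m) * stdPdf m +
      (2 * sb / (1 + sb)) * m ^ 2 * stdCDF (Real.sqrt sb * m) * stdPdf m +
      (2 * Real.sqrt sb / (1 + sb)) * m * stdPdf (Real.sqrt sb * m) * stdPdf m) :
    (∀ m, 0 ≤ p m) ∧ (∫ m, p m) = 1 := by
  have hsb_pos : 0 < sb := hsb.1
  have hp_nonneg (m : ℝ) : 0 ≤ p m := by
    have hmills := one_add_sq_mul_stdCDF_add_mul_stdPdf_nonneg (√sb * m)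
    have hp_factor : p m = 2 / (1 + sb) * stdPdf m * ((1 + (√sb * m) ^ 2) * stdCDF (√sb * m) +
        √sb * m * stdPdf (√sb * m)) := by
      rw [hp, mul_pow, sq_sqrt hsb_pos.le]; ring
    rw [hp_factor]
    exact mul_nonneg (mul_nonneg (by positivity) (stdPdf_nonneg m)) hmills
  have hp_symm (m : ℝ) : p m + p (-m) = 2 / (1 + sb) * ((1 + sb * m ^ 2) * stdPdf m) := by
    rw [hp, hp, mul_neg, stdCDF_neg, stdPdf_neg, stdPdf_neg]; ring
  have hp_int : Integrable p := by
    refine ((integrable_one_add_mul_sq_mul_stdPdf sb).const_mul (2 / (1 + sb))).mono' ?_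
      (.of_forall fun m => ?_)
    · rw [funext hp]
      exact (by fun_prop : Measurable _).aestronglyMeasurable
    · rw [norm_of_nonneg (hp_nonneg m), ← hp_symm]
      linarith [hp_nonneg (-m)]
  refine ⟨hp_nonneg, ?_⟩
  have h := integral_add_comp_neg hp_int
  simp_rw [hp_symm, integral_const_mul, integral_one_add_mul_sq_mul_stdPdf, smul_eq_mul] at h
  field_simp at h
  linarith
end
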